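/- Let G and M be finite groups of the same order, let λ_G : G → Perm(G) and λ_M : M → Perm(M) be the respective left regular representations. Let R(G,[M]) be the set of regular subgroups of Perm(G) normalized by λ_G(G) and isomorphic to M, and let S(M,[G]) be the set of subgroups U of the normalizer of λ_M(M) in Perm(M) such that U is regular on M and U is isomorphic to G. Then |R(G,[M])| · |Aut(M)| = |Aut(G)| · |S(M,[G])|. -/

import Mathlib

/-- The left regular representation `λ : G → Perm(G)`, `λ(g)(h) = g * h`. -/
def leftReg (G : Type*) [Group G] : G →* Equiv.Perm G :=
  MulAction.toPermHom G G

/-- A subgroup of `Perm(X)` is regular if it acts transitively and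
fixed-point-freely on `X`. -/
def IsRegularSubgroup {X : Type*} (N : Subgroup (Equiv.Perm X)) : Prop :=
  ∀ x y : X, ∃! n : N, (n : Equiv.Perm X) x = y

/-- A subgroup `P ≤ Perm(G)` is normalized by `λ(G)`. -/
def NormalizedByLeftReg {G : Type*} [Group G] (P : Subgroup (Equiv.Perm G)) : Prop :=
  ∀ g : G, ∀ x : Equiv.Perm G, leftReg G g * x * (leftReg G g)⁻¹ ∈ P ↔ x ∈ P

open Equiv Function

@[simp] lemma leftReg_apply {G : Type*} [Group G] (g x : G) : leftReg G g x = g * x := rfl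

lemma leftReg_injective (G : Type*) [Group G] : Function.Injective (leftReg G) := by
  intro a b h
  simpa using congrArg (fun p : Equiv.Perm G => p 1) h

/-- `permCongr` as a `MulEquiv`. -/
def permCongrMul {X Y : Type*} (e : X ≃ Y) : Equiv.Perm X ≃* Equiv.Perm Y where
  toEquiv := Equiv.permCongr e
  map_mul' p q := Equiv.ext fun y => by
    simp [Equiv.permCongr_apply, Equiv.Perm.mul_apply]

@[simp] lemma permCongrMul_apply {X Y : Type*} (e : X ≃ Y) (p : Equiv.Perm X) (y : Y) :
    permCongrMul e p y = e (p (e.symm y)) := rfl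

lemma permCongrMul_symm {X Y : Type*} (e : X ≃ Y) :
    (permCongrMul e).symm = permCongrMul e.symm := rfl

section Step
variable {X Y : Type*} [Group X] [Group Y]

/-- The bijection `Y ≃ X` induced by an injective hom with regular range. -/
noncomputable def regEquiv (f : Y →* Equiv.Perm X)
    (hinj : Function.Injective f) (hreg : IsRegularSubgroup f.range) : Y ≃ X :=
  Equiv.ofBijective (fun y => f y 1)
    ⟨by
      intro a b h
      obtain ⟨n, -, hu⟩ := hreg 1 (f a 1)
      have ha := hu ⟨f a, ⟨a, rfl⟩⟩ rfl
      have hb := hu ⟨f b, ⟨b, rfl⟩⟩ h.symm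
      exact hinj (Subtype.ext_iff.mp (ha.trans hb.symm)),
     by
      intro x
      obtain ⟨n, hn, -⟩ := hreg 1 x
      obtain ⟨y, hy⟩ := n.2
      exact ⟨y, by show f y 1 = x; rw [hy]; exact hn⟩⟩

@[simp] lemma regEquiv_apply (f : Y →* Equiv.Perm X) (hinj hreg) (y : Y) :
    regEquiv f hinj hreg y = f y 1 := rfl

/-- Byott's transfer: from an embedding of `Y` into `Perm X` with regular image,
an embedding of `X` into `Perm Y` with regular image. -/
noncomputable def step (f : Y →* Equiv.Perm X) (hinj : Function.Injective f)
    (hreg : IsRegularSubgroup f.range) : X →* Equiv.Perm Y :=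
  (permCongrMul (regEquiv f hinj hreg).symm).toMonoidHom.comp (leftReg X)

lemma step_key (f : Y →* Equiv.Perm X) (hinj hreg) (m : Y) :
    permCongrMul (regEquiv f hinj hreg).symm (f m) = leftReg Y m := by
  ext y
  show (regEquiv f hinj hreg).symm (f m ((regEquiv f hinj hreg) y)) = m * y
  have : f m ((regEquiv f hinj hreg) y) = (regEquiv f hinj hreg) (m * y) := by
    show f m (f y 1) = f (m * y) 1
    rw [map_mul]; rfl
  rw [this, Equiv.symm_apply_apply]

lemma step_key' (f : Y →* Equiv.Perm X) (hinj hreg) (m : Y) :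
    f m = permCongrMul (regEquiv f hinj hreg) (leftReg Y m) := by
  have := congrArg (permCongrMul (regEquiv f hinj hreg).symm).symm (step_key f hinj hreg m)
  rw [MulEquiv.symm_apply_apply] at this
  rw [this, permCongrMul_symm, Equiv.symm_symm]

lemma step_apply (f : Y →* Equiv.Perm X) (hinj hreg) (x : X) :
    step f hinj hreg x = permCongrMul (regEquiv f hinj hreg).symm (leftReg X x) := rfl

lemma step_comp_eq (f : Y →* Equiv.Perm X) (hinj hreg) :
    (permCongrMul (regEquiv f hinj hreg).symm).toMonoidHom.comp f = leftReg Y :=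
  MonoidHom.ext (step_key f hinj hreg)

lemma step_injective (f : Y →* Equiv.Perm X) (hinj hreg) :
    Function.Injective (step f hinj hreg) :=
  (permCongrMul (regEquiv f hinj hreg).symm).injective.comp (leftReg_injective X)

lemma step_range (f : Y →* Equiv.Perm X) (hinj hreg) :
    (step f hinj hreg).range =
      Subgroup.map (permCongrMul (regEquiv f hinj hreg).symm).toMonoidHom (leftReg X).range :=
  MonoidHom.range_comp _ _

lemma map_range_eq (f : Y →* Equiv.Perm X) (hinj hreg) :
    Subgroup.map (permCongrMul (regEquiv f hinj hreg).symm).toMonoidHom f.range =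
      (leftReg Y).range := by
  rw [← MonoidHom.range_comp, step_comp_eq]

lemma regEquiv_step (f : Y →* Equiv.Perm X) (hinj hreg) (hinj' hreg') :
    regEquiv (step f hinj hreg) hinj' hreg' = (regEquiv f hinj hreg).symm := by
  ext x
  show (step f hinj hreg x) 1 = (regEquiv f hinj hreg).symm x
  rw [step_apply]
  show (regEquiv f hinj hreg).symm (leftReg X x ((regEquiv f hinj hreg) 1)) = _
  have h1 : (regEquiv f hinj hreg) 1 = 1 := by
    show f 1 1 = 1; simp
  rw [h1, leftReg_apply, mul_one]

lemma step_step (f : Y →* Equiv.Perm X) (hinj hreg) (hinj' hreg') :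
    step (step f hinj hreg) hinj' hreg' = f := by
  refine MonoidHom.ext fun m => ?_
  show permCongrMul (regEquiv (step f hinj hreg) hinj' hreg').symm (leftReg Y m) = f m
  rw [regEquiv_step f hinj hreg, Equiv.symm_symm, ← step_key' f hinj hreg m]

lemma leftReg_regular (X : Type*) [Group X] : IsRegularSubgroup (leftReg X).range := by
  intro x y
  refine ⟨⟨leftReg X (y * x⁻¹), ⟨y * x⁻¹, rfl⟩⟩, by show y * x⁻¹ * x = y; rw [inv_mul_cancel_right], ?_⟩
  rintro ⟨n, g, rfl⟩ hn
  have : g * x = y := hn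
  apply Subtype.ext
  show leftReg X g = leftReg X (y * x⁻¹)
  congr 1
  rw [← this, mul_inv_cancel_right]

lemma map_regular {X Y : Type*} (e : X ≃ Y) (P : Subgroup (Equiv.Perm X))
    (h : IsRegularSubgroup P) :
    IsRegularSubgroup (P.map (permCongrMul e).toMonoidHom) := by
  intro y y'
  obtain ⟨p, hp, hu⟩ := h (e.symm y) (e.symm y')
  refine ⟨⟨permCongrMul e p, Subgroup.mem_map_of_mem _ p.2⟩, by simp [hp], ?_⟩
  rintro ⟨n, hn⟩ hny
  obtain ⟨q, hq, rfl⟩ := hn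
  have hqy : q (e.symm y) = e.symm y' := by
    have := congrArg e.symm hny
    simpa using this
  have := hu ⟨q, hq⟩ hqy
  exact Subtype.ext (congrArg (fun z : P => permCongrMul e (z : Equiv.Perm X)) this)

lemma step_le_normalizer (f : Y →* Equiv.Perm X) (hinj hreg)
    (hnorm : NormalizedByLeftReg f.range) :
    (step f hinj hreg).range ≤ Subgroup.normalizer ((leftReg Y).range : Set (Equiv.Perm Y)) := by
  rintro u ⟨g, rfl⟩
  rw [Subgroup.mem_normalizer_iff]
  intro h
  set Φ := permCongrMul (regEquiv f hinj hreg).symm with hΦ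
  rw [← map_range_eq f hinj hreg, Subgroup.mem_map_equiv, Subgroup.mem_map_equiv]
  have : Φ.symm (step f hinj hreg g * h * (step f hinj hreg g)⁻¹) =
      leftReg X g * Φ.symm h * (leftReg X g)⁻¹ := by
    rw [step_apply, map_mul, map_mul, map_inv, MulEquiv.symm_apply_apply]
  rw [this]
  exact (hnorm g (Φ.symm h)).symm

lemma step_normalized (u : X →* Equiv.Perm Y) (hinj hreg)
    (hle : u.range ≤ Subgroup.normalizer ((leftReg Y).range : Set (Equiv.Perm Y))) :
    NormalizedByLeftReg (step u hinj hreg).range := by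
  intro x w
  set Ψ := permCongrMul (regEquiv u hinj hreg).symm with hΨ
  rw [step_range]
  have hx : leftReg X x = Ψ (u x) := (step_key u hinj hreg x).symm
  have hnorm := Subgroup.mem_normalizer_iff.mp (hle ⟨x, rfl⟩)
  have key : leftReg X x * w * (leftReg X x)⁻¹ = Ψ (u x * Ψ.symm w * (u x)⁻¹) := by
    rw [map_mul, map_mul, map_inv, MulEquiv.apply_symm_apply, hx]
  rw [key]
  rw [Subgroup.mem_map_equiv, Subgroup.mem_map_equiv, MulEquiv.symm_apply_apply]
  exact (hnorm (Ψ.symm w)).symm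

end Step

section Count

variable {X P : Type*} [Group X] [Group P]

/-- The fiber of "take the range" over a subgroup `N` is a torsor under `Aut P`. -/
noncomputable def fiberEquiv (Q : Subgroup (Equiv.Perm X) → Prop)
    (N : Subgroup (Equiv.Perm X)) (hQ : Q N) (hne : Nonempty (↥N ≃* P)) :
    {f : {f : P →* Equiv.Perm X // Function.Injective f ∧ Q f.range} // f.1.range = N} ≃
      MulAut P := by
  classical
  obtain α0 := Classical.choice hne
  have hrange : ∀ ρ : P ≃* P, (N.subtype.comp ((MulEquiv.toMonoidHom α0.symm).comp
      (MulEquiv.toMonoidHom ρ))).range = N := by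
    intro ρ
    ext x
    constructor
    · rintro ⟨p, rfl⟩
      exact (α0.symm (ρ p)).2
    · intro hx
      exact ⟨ρ.symm (α0 ⟨x, hx⟩), by simp⟩
  exact
  { toFun := fun f =>
      ((MonoidHom.ofInjective f.1.2.1).trans (MulEquiv.subgroupCongr f.2)).trans α0
    invFun := fun ρ =>
      ⟨⟨N.subtype.comp ((MulEquiv.toMonoidHom α0.symm).comp (MulEquiv.toMonoidHom (ρ : P ≃* P))),
        N.subtype_injective.comp (α0.symm.injective.comp (ρ : P ≃* P).injective),
        by rw [hrange (ρ : P ≃* P)]; exact hQ⟩, hrange (ρ : P ≃* P)⟩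
    left_inv := by
      rintro ⟨⟨f, hinj, hq⟩, hf⟩
      apply Subtype.ext
      apply Subtype.ext
      refine MonoidHom.ext fun p => ?_
      show ((α0.symm (α0 (MulEquiv.subgroupCongr hf (MonoidHom.ofInjective hinj p)))) : Equiv.Perm X) = f p
      rw [MulEquiv.symm_apply_apply]
      rfl
    right_inv := by
      intro ρ
      refine MulEquiv.ext fun p => ?_
      have h1 : (MulEquiv.subgroupCongr (hrange (ρ : P ≃* P)) (MonoidHom.ofInjective
          (f := N.subtype.comp ((MulEquiv.toMonoidHom α0.symm).comp
            (MulEquiv.toMonoidHom (ρ : P ≃* P))))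
          (N.subtype_injective.comp (α0.symm.injective.comp (ρ : P ≃* P).injective)) p) : ↥N) =
          α0.symm ((ρ : P ≃* P) p) := Subtype.ext rfl
      show α0 (MulEquiv.subgroupCongr (hrange (ρ : P ≃* P)) (MonoidHom.ofInjective
          (f := N.subtype.comp ((MulEquiv.toMonoidHom α0.symm).comp
            (MulEquiv.toMonoidHom (ρ : P ≃* P))))
          (N.subtype_injective.comp (α0.symm.injective.comp (ρ : P ≃* P).injective)) p)) =
          (ρ : P ≃* P) p
      rw [h1, MulEquiv.apply_symm_apply] }

end Count


section Count2
variable {X P : Type*} [Group X] [Group P]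

lemma card_embeddings (Q : Subgroup (Equiv.Perm X) → Prop) :
    Nat.card {f : P →* Equiv.Perm X // Function.Injective f ∧ Q f.range} =
      Nat.card {N : Subgroup (Equiv.Perm X) // Q N ∧ Nonempty (↥N ≃* P)} *
        Nat.card (MulAut P) := by
  rw [← Nat.card_prod]
  refine Nat.card_congr ?_
  let A := {f : P →* Equiv.Perm X // Function.Injective f ∧ Q f.range}
  let R := {N : Subgroup (Equiv.Perm X) // Q N ∧ Nonempty (↥N ≃* P)}
  let π : A → R := fun f => ⟨f.1.range, f.2.2, ⟨(MonoidHom.ofInjective f.2.1).symm⟩⟩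
  calc A ≃ Σ N : R, {f : A // π f = N} := (Equiv.sigmaFiberEquiv π).symm
    _ ≃ Σ N : R, {f : A // f.1.range = N.1} :=
        Equiv.sigmaCongrRight fun N => Equiv.subtypeEquivRight fun f => Subtype.ext_iff
    _ ≃ Σ _ : R, MulAut P :=
        Equiv.sigmaCongrRight fun N => fiberEquiv Q N.1 N.2.1 N.2.2
    _ ≃ R × MulAut P := Equiv.sigmaEquivProd R (MulAut P)

end Count2

/-- Byott's bijection between regular normalized embeddings. -/
noncomputable def byottEquiv (G M : Type*) [Group G] [Group M] :
    {f : M →* Equiv.Perm G // Function.Injective f ∧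
        (IsRegularSubgroup f.range ∧ NormalizedByLeftReg f.range)} ≃
    {u : G →* Equiv.Perm M // Function.Injective u ∧
        (IsRegularSubgroup u.range ∧ u.range ≤ Subgroup.normalizer ((leftReg M).range : Set (Equiv.Perm M)))} where
  toFun f := ⟨step f.1 f.2.1 f.2.2.1, step_injective f.1 f.2.1 f.2.2.1,
    by rw [step_range]; exact map_regular _ _ (leftReg_regular G),
    step_le_normalizer f.1 f.2.1 f.2.2.1 f.2.2.2⟩
  invFun u := ⟨step u.1 u.2.1 u.2.2.1, step_injective u.1 u.2.1 u.2.2.1,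
    by rw [step_range]; exact map_regular _ _ (leftReg_regular M),
    step_normalized u.1 u.2.1 u.2.2.1 u.2.2.2⟩
  left_inv f := Subtype.ext (step_step f.1 f.2.1 f.2.2.1 _ _)
  right_inv u := Subtype.ext (step_step u.1 u.2.1 u.2.2.1 _ _)


theorem byott_translation
    {G M : Type*} [Group G] [Fintype G] [Group M] [Fintype M]
    (hcard : Nat.card G = Nat.card M) :
    Nat.card {N : Subgroup (Equiv.Perm G) //
        IsRegularSubgroup N ∧ NormalizedByLeftReg N ∧ Nonempty (N ≃* M)} *
      Nat.card (MulAut M) =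
    Nat.card (MulAut G) *
      Nat.card {U : Subgroup (Equiv.Perm M) //
        U ≤ Subgroup.normalizer ((leftReg M).range : Set (Equiv.Perm M)) ∧ IsRegularSubgroup U ∧ Nonempty (U ≃* G)} := by
  classical
  have hA := card_embeddings (X := G) (P := M)
      (fun N => IsRegularSubgroup N ∧ NormalizedByLeftReg N)
  have hB := card_embeddings (X := M) (P := G)
      (fun U => IsRegularSubgroup U ∧ U ≤ Subgroup.normalizer ((leftReg M).range : Set (Equiv.Perm M)))
  have hE := Nat.card_congr (byottEquiv G M)
  have hR : Nat.card {N : Subgroup (Equiv.Perm G) //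
        IsRegularSubgroup N ∧ NormalizedByLeftReg N ∧ Nonempty (N ≃* M)} =
      Nat.card {N : Subgroup (Equiv.Perm G) //
        (IsRegularSubgroup N ∧ NormalizedByLeftReg N) ∧ Nonempty (↥N ≃* M)} :=
    Nat.card_congr (Equiv.subtypeEquivRight fun N => by tauto)
  have hS : Nat.card {U : Subgroup (Equiv.Perm M) //
        U ≤ Subgroup.normalizer ((leftReg M).range : Set (Equiv.Perm M)) ∧ IsRegularSubgroup U ∧ Nonempty (U ≃* G)} =
      Nat.card {U : Subgroup (Equiv.Perm M) //
        (IsRegularSubgroup U ∧ U ≤ Subgroup.normalizer ((leftReg M).range : Set (Equiv.Perm M))) ∧ Nonempty (↥U ≃* G)} :=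
    Nat.card_congr (Equiv.subtypeEquivRight fun U => by tauto)
  rw [hR, hS, ← hA, hE, hB, mul_comm]
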